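/- Let R and S be rings. The functor Ψ from Mod(R^op ⊗_Z S) (the category of R-S-bimodules) to the category B(Mod R, Mod S) of right exact direct-limit-preserving functors Mod R → Mod S, given on objects by B ↦ (− ⊗_R B), is an equivalence of categories. -/

import Mathlib

open CategoryTheory CategoryTheory.Limits MulOpposite

universe u

section Preamble

variable (k : Type*) [CommRing k] (R : Type u) [Ring R] [Algebra k R]
variable (A : Type*) [Category.{u} A] [Preadditive A] [CategoryTheory.Linear k A]

/-- A left `R`-module in the `k`-linear category `A`: an object together with a
ring homomorphism `ρ : R → End 𝓕` which is `k`-linear, i.e. a `k`-algebra homomorphism. -/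
structure LMod where
  X : A
  ρ : R →+* End X
  algebraMap_smul' : ∀ a : k, ρ (algebraMap k R a) = a • (𝟙 X)

variable {k R A}

/-- the `k`-module structure on right `R`-modules obtained by restriction of scalars -/
noncomputable instance (M : ModuleCat.{u} Rᵐᵒᵖ) : Module k M :=
  RestrictScalars.module k Rᵐᵒᵖ M

instance (M : ModuleCat.{u} Rᵐᵒᵖ) : IsScalarTower k Rᵐᵒᵖ M :=
  RestrictScalars.isScalarTower k Rᵐᵒᵖ M

/-- The `k`-linear structure on the category of right `R`-modules, `a • m = m · γ(a)`. -/
noncomputable instance : CategoryTheory.Linear k (ModuleCat.{u} Rᵐᵒᵖ) where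
  homModule _ _ := ModuleCat.Hom.instModule
  smul_comp := by
    intros
    ext
    simp

/-- `Hom_A(𝓕, N)` is a right `R`-module via `α · r := ρ(r) ≫ α`. -/
instance homRMod (F : LMod k R A) (N : A) : Module Rᵐᵒᵖ (F.X ⟶ N) where
  smul r α := F.ρ r.unop ≫ α
  one_smul α := by show F.ρ _ ≫ α = α; simp
  mul_smul r s α := by
    show F.ρ _ ≫ α = F.ρ _ ≫ F.ρ _ ≫ α
    rw [unop_mul, map_mul, End.mul_def, Category.assoc]
  smul_zero r := by show _ ≫ (0 : F.X ⟶ N) = 0; simp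
  smul_add r α β := by show _ ≫ (α + β) = _ ≫ α + _ ≫ β; simp
  add_smul r s α := by
    show F.ρ _ ≫ α = F.ρ _ ≫ α + F.ρ _ ≫ α
    rw [MulOpposite.unop_add, map_add]; exact Preadditive.add_comp _ _ _ _ _ _
  zero_smul α := by show F.ρ _ ≫ α = 0; rw [MulOpposite.unop_zero, map_zero]; exact Limits.zero_comp

lemma homRMod_smul_def (F : LMod k R A) {N : A} (r : Rᵐᵒᵖ) (α : F.X ⟶ N) :
    r • α = F.ρ r.unop ≫ α := rfl

/-- The functor `Hom_A(𝓕, -) : A ⥤ Mod R`. -/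
noncomputable def homFunctor (F : LMod k R A) : A ⥤ ModuleCat.{u} Rᵐᵒᵖ where
  obj N := ModuleCat.of Rᵐᵒᵖ (F.X ⟶ N)
  map {N N'} f := ModuleCat.ofHom
    { toFun := fun α => α ≫ f
      map_add' := fun α β => Preadditive.add_comp _ _ _ _ _ _
      map_smul' := fun r α => by
        show (F.ρ r.unop ≫ α) ≫ f = F.ρ r.unop ≫ (α ≫ f)
        rw [Category.assoc] }
  map_id N := by
    apply ModuleCat.hom_ext; apply LinearMap.ext; intro α; exact Category.comp_id α
  map_comp f g := by
    apply ModuleCat.hom_ext; apply LinearMap.ext; intro α; exact (Category.assoc _ _ _).symm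

/-- `R` as a right module over itself. -/
noncomputable abbrev RR : ModuleCat.{u} Rᵐᵒᵖ := ModuleCat.of Rᵐᵒᵖ Rᵐᵒᵖ

variable (R) in
/-- left multiplication `μ_x` by `x` on `R`, a right `R`-module map -/
def mulMap (x : R) : (RR : ModuleCat.{u} Rᵐᵒᵖ) ⟶ RR := ModuleCat.ofHom {
  toFun r := op (x * r.unop)
  map_add' r s := by
    apply unop_injective
    show x * (r + s).unop = _
    rw [show (r + s).unop = r.unop + s.unop from rfl, mul_add]; rfl
  map_smul' s t := by
    apply unop_injective
    show x * (s • t).unop = ((s • op (x * t.unop)).unop)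
    rw [show (s • t).unop = t.unop * s.unop from rfl,
      show (s • op (x * t.unop)).unop = (x * t.unop) * s.unop from rfl, mul_assoc]
  }

/-- Morphisms `𝓕 → 𝓖` of left `R`-modules in `A` induce natural transformations
`Hom_A(𝓖,-) ⟶ Hom_A(𝓕,-)`. -/
noncomputable def homPre {F G : LMod k R A} (φ : F.X ⟶ G.X)
    (h : ∀ r : R, F.ρ r ≫ φ = φ ≫ G.ρ r) : homFunctor G ⟶ homFunctor F where
  app N := ModuleCat.ofHom
    { toFun := fun α => φ ≫ α
      map_add' := fun α β => Preadditive.comp_add _ _ _ _ _ _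
      map_smul' := fun r α => by
        show φ ≫ G.ρ r.unop ≫ α = F.ρ r.unop ≫ φ ≫ α
        rw [← Category.assoc, ← h, Category.assoc] }
  naturality N N' f := by
    apply ModuleCat.hom_ext; apply LinearMap.ext; intro α; exact (Category.assoc _ _ _).symm

/-- `M ⊗ φ` : the natural transformation `- ⊗_R 𝓕 ⟶ - ⊗_R 𝓖` induced by `φ : 𝓕 ⟶ 𝓖`,
obtained as the conjugate (mate) of `homPre φ`. -/
noncomputable def tensorMap {F G : LMod k R A} {TF TG : ModuleCat.{u} Rᵐᵒᵖ ⥤ A}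
    (adjF : TF ⊣ homFunctor F) (adjG : TG ⊣ homFunctor G) (φ : F.X ⟶ G.X)
    (h : ∀ r : R, F.ρ r ≫ φ = φ ≫ G.ρ r) : TF ⟶ TG :=
  (conjugateEquiv adjG adjF).symm (homPre φ h)

/-- The canonical map `ξ_𝓕 : 𝓕 ⟶ R ⊗_R 𝓕`. -/
noncomputable def xi {F : LMod k R A} {TF : ModuleCat.{u} Rᵐᵒᵖ ⥤ A}
    (adjF : TF ⊣ homFunctor F) : F.X ⟶ TF.obj RR :=
  (adjF.unit.app RR) (1 : Rᵐᵒᵖ)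

end Preamble

section Bimod
open TensorProduct

variable (R : Type u) [Ring R] (S : Type u) [Ring S]

/-- the inclusion `Sᵐᵒᵖ → (Rᵐᵒᵖ ⊗[ℤ] S)ᵐᵒᵖ` -/
noncomputable def inclS : Sᵐᵒᵖ →+* (Rᵐᵒᵖ ⊗[ℤ] S)ᵐᵒᵖ :=
  RingHom.op (Algebra.TensorProduct.includeRight.toRingHom)

/-- the inclusion `R → (Rᵐᵒᵖ ⊗[ℤ] S)ᵐᵒᵖ` -/
noncomputable def inclR : R →+* (Rᵐᵒᵖ ⊗[ℤ] S)ᵐᵒᵖ :=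
  (RingHom.op (Algebra.TensorProduct.includeLeftRingHom)).comp (RingEquiv.opOp R).toRingHom

lemma inclS_comm_inclR (s : Sᵐᵒᵖ) (x : R) :
    inclS R S s * inclR R S x = inclR R S x * inclS R S s := by
  apply unop_injective
  show ((op x : Rᵐᵒᵖ) ⊗ₜ[ℤ] (1 : S)) * ((1 : Rᵐᵒᵖ) ⊗ₜ[ℤ] s.unop)
    = ((1 : Rᵐᵒᵖ) ⊗ₜ[ℤ] s.unop) * ((op x : Rᵐᵒᵖ) ⊗ₜ[ℤ] (1 : S))
  rw [Algebra.TensorProduct.tmul_mul_tmul, Algebra.TensorProduct.tmul_mul_tmul,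
    one_mul, mul_one, one_mul, mul_one]

variable {R S}

/-- An `R`-`S`-bimodule restricts to a right `S`-module. -/
noncomputable instance bimodModS (B : ModuleCat.{u} (Rᵐᵒᵖ ⊗[ℤ] S)ᵐᵒᵖ) : Module Sᵐᵒᵖ B :=
  Module.compHom B (inclS R S)

/-- The left `R`-action on an `R`-`S`-bimodule. -/
noncomputable instance bimodModR (B : ModuleCat.{u} (Rᵐᵒᵖ ⊗[ℤ] S)ᵐᵒᵖ) : Module R B :=
  Module.compHom B (inclR R S)

instance bimodSMulComm (B : ModuleCat.{u} (Rᵐᵒᵖ ⊗[ℤ] S)ᵐᵒᵖ) :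
    SMulCommClass R Sᵐᵒᵖ B where
  smul_comm x s b := by
    show inclR R S x • inclS R S s • b = inclS R S s • inclR R S x • b
    rw [smul_smul, smul_smul, inclS_comm_inclR]

/-- An `R`-`S`-bimodule, i.e. a right module over `Rᵒᵖ ⊗_ℤ S`, is a left `R`-module
in the category of right `S`-modules. -/
noncomputable def bimodToLMod (B : ModuleCat.{u} (Rᵐᵒᵖ ⊗[ℤ] S)ᵐᵒᵖ) :
    LMod ℤ R (ModuleCat.{u} Sᵐᵒᵖ) where
  X := ModuleCat.of Sᵐᵒᵖ B
  ρ :=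
    { toFun := fun x => ModuleCat.ofHom (Module.toModuleEnd (R := Sᵐᵒᵖ) (M := B) (S := R) x)
      map_one' := ModuleCat.hom_ext
        (by exact map_one (Module.toModuleEnd (R := Sᵐᵒᵖ) (M := B) (S := R)))
      map_mul' := fun x y => ModuleCat.hom_ext (by
        exact map_mul (Module.toModuleEnd (R := Sᵐᵒᵖ) (M := B) (S := R)) x y)
      map_zero' := ModuleCat.hom_ext
        (by exact map_zero (Module.toModuleEnd (R := Sᵐᵒᵖ) (M := B) (S := R)))
      map_add' := fun x y => ModuleCat.hom_ext (by
        exact map_add (Module.toModuleEnd (R := Sᵐᵒᵖ) (M := B) (S := R)) x y) }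
  algebraMap_smul' a := ModuleCat.hom_ext <| LinearMap.ext fun (b : (B : Type u)) => by
    show algebraMap ℤ R a • b = (a • 𝟙 (ModuleCat.of Sᵐᵒᵖ B)).hom b
    rw [ModuleCat.hom_smul, LinearMap.smul_apply, ← algebraMap_smul (A := Sᵐᵒᵖ) (r := a)
        (m := ModuleCat.Hom.hom (𝟙 (ModuleCat.of Sᵐᵒᵖ B)) b)]
    show inclR R S (algebraMap ℤ R a) • b = inclS R S (algebraMap ℤ Sᵐᵒᵖ a) • b
    rw [show algebraMap ℤ R a = ((a : R)) from by simp,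
      show algebraMap ℤ Sᵐᵒᵖ a = ((a : Sᵐᵒᵖ)) from by simp,
      map_intCast, map_intCast]


/-- The morphism of left `R`-modules in `Mod S` induced by a morphism of bimodules. -/
noncomputable def bimodMap {B B' : ModuleCat.{u} (Rᵐᵒᵖ ⊗[ℤ] S)ᵐᵒᵖ} (f : B ⟶ B') :
    (bimodToLMod B).X ⟶ (bimodToLMod B').X := ModuleCat.ofHom
  { toFun := fun (b : (B : Type u)) => f.hom b
    map_add' := map_add f.hom
    map_smul' := fun s b => by exact f.hom.map_smul (inclS R S s) b }

lemma bimodMap_equivariant {B B' : ModuleCat.{u} (Rᵐᵒᵖ ⊗[ℤ] S)ᵐᵒᵖ} (f : B ⟶ B') (x : R) :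
    (bimodToLMod B).ρ x ≫ bimodMap f = bimodMap f ≫ (bimodToLMod B').ρ x :=
  ModuleCat.hom_ext <| LinearMap.ext fun (b : (B : Type u)) => by
    show f (inclR R S x • b) = inclR R S x • f b
    exact f.hom.map_smul _ b

variable (R S) in
/-- The defining property of the category `B(Mod R, Mod S)`: right exact functors
commuting with direct sums (equivalently, with direct limits). -/
def WattsObjZ (T : ModuleCat.{u} Rᵐᵒᵖ ⥤ ModuleCat.{u} Sᵐᵒᵖ) : Prop :=
  T.Additive ∧ Nonempty (PreservesFiniteColimits T) ∧
    ∀ ι : Type u, Nonempty (PreservesColimitsOfShape (Discrete ι) T)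

end Bimod

/-!
A natural transformation `- ⊗_R B ⟶ - ⊗_R B'` is, by the mate correspondence, a natural
transformation `Hom_S(B', -) ⟶ Hom_S(B, -)`, and by Yoneda this is precomposition with an
`S`-linear map `B → B'` commuting with the `R`-actions, i.e. a bimodule map; so `Ψ` is fully
faithful. Conversely, a functor `T` in `B(Mod R, Mod S)` preserves all colimits, so by the special
adjoint functor theorem (`R` separates `Mod R`) it has a right adjoint `G`. Then
`G N ≅ Hom_R(R, G N) ≅ Hom_S(T(R), N)`, where `T(R)` is a bimodule with `R` acting through `T`
applied to left multiplications; hence `T` and `- ⊗_R T(R)` are left adjoints of the same functor.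
-/

section HomFunctor

variable {k : Type*} [CommRing k] {R : Type u} [Ring R] [Algebra k R] {A : Type*}
  [Category.{u} A] [Preadditive A] [CategoryTheory.Linear k A] {F G : LMod k R A}

@[simp]
lemma homPre_app_apply {φ : F.X ⟶ G.X} (h : ∀ r : R, F.ρ r ≫ φ = φ ≫ G.ρ r) {N : A}
    (α : G.X ⟶ N) : (homPre φ h).app N α = φ ≫ α := rfl

lemma homFunctor_natTrans_app_eq (τ : homFunctor G ⟶ homFunctor F) {N : A} (α : G.X ⟶ N) :
    τ.app N α = τ.app G.X (𝟙 G.X) ≫ α := by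
  have h : τ.app N (𝟙 G.X ≫ α) = τ.app G.X (𝟙 G.X) ≫ α :=
    ConcreteCategory.congr_hom (τ.naturality α) (𝟙 G.X)
  rwa [Category.id_comp] at h

lemma homFunctor_natTrans_app_id_comm (τ : homFunctor G ⟶ homFunctor F) (r : R) :
    F.ρ r ≫ τ.app G.X (𝟙 G.X) = τ.app G.X (𝟙 G.X) ≫ G.ρ r := by
  have h : τ.app G.X (G.ρ r ≫ 𝟙 G.X) = F.ρ r ≫ τ.app G.X (𝟙 G.X) :=
    (τ.app G.X).hom.map_smul (op r) (𝟙 G.X)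
  rw [← h, Category.comp_id, homFunctor_natTrans_app_eq]

lemma eq_homPre_app_id (τ : homFunctor G ⟶ homFunctor F) :
    τ = homPre (τ.app G.X (𝟙 G.X)) (homFunctor_natTrans_app_id_comm τ) := by
  ext N α
  exact homFunctor_natTrans_app_eq τ α

lemma homPre_injective {φ φ' : F.X ⟶ G.X} {h : ∀ r : R, F.ρ r ≫ φ = φ ≫ G.ρ r}
    {h' : ∀ r : R, F.ρ r ≫ φ' = φ' ≫ G.ρ r} (heq : homPre φ h = homPre φ' h') : φ = φ' := by
  have h := ConcreteCategory.congr_hom (congr_app heq G.X) (𝟙 G.X)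
  rwa [homPre_app_apply, homPre_app_apply, Category.comp_id, Category.comp_id] at h

variable {TF TG : ModuleCat.{u} Rᵐᵒᵖ ⥤ A} (adjF : TF ⊣ homFunctor F) (adjG : TG ⊣ homFunctor G)

lemma tensorMap_injective {φ φ' : F.X ⟶ G.X} {h : ∀ r : R, F.ρ r ≫ φ = φ ≫ G.ρ r}
    {h' : ∀ r : R, F.ρ r ≫ φ' = φ' ≫ G.ρ r}
    (heq : tensorMap adjF adjG φ h = tensorMap adjF adjG φ' h') : φ = φ' :=
  homPre_injective ((conjugateEquiv adjG adjF).symm.injective heq)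

lemma exists_tensorMap_eq (η : TF ⟶ TG) :
    ∃ (φ : F.X ⟶ G.X) (h : ∀ r : R, F.ρ r ≫ φ = φ ≫ G.ρ r), tensorMap adjF adjG φ h = η := by
  set τ := conjugateEquiv adjG adjF η
  refine ⟨_, homFunctor_natTrans_app_id_comm τ, ?_⟩
  unfold tensorMap
  rw [← eq_homPre_app_id, Equiv.symm_apply_apply]

end HomFunctor

section Bimodule
open TensorProduct

variable {R : Type u} [Ring R] {S : Type u} [Ring S]

lemma op_tmul_eq_inclR_mul_inclS (x : Rᵐᵒᵖ) (s : S) :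
    op (x ⊗ₜ[ℤ] s) = inclR R S x.unop * inclS R S (op s) := by
  apply unop_injective
  change x ⊗ₜ[ℤ] s = ((1 : Rᵐᵒᵖ) ⊗ₜ[ℤ] s) * (op x.unop ⊗ₜ[ℤ] (1 : S))
  rw [Algebra.TensorProduct.tmul_mul_tmul, one_mul, mul_one, op_unop]

variable {B B' : ModuleCat.{u} (Rᵐᵒᵖ ⊗[ℤ] S)ᵐᵒᵖ}

lemma bimodMap_injective : Function.Injective (bimodMap : (B ⟶ B') → _) := fun f g h => by
  ext b
  exact ConcreteCategory.congr_hom h b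

/-- `Rᵐᵒᵖ ⊗[ℤ] S` is additively spanned by the products `inclR x * inclS s`. -/
lemma exists_bimodMap_eq (φ : (bimodToLMod B).X ⟶ (bimodToLMod B').X)
    (hφ : ∀ x : R, (bimodToLMod B).ρ x ≫ φ = φ ≫ (bimodToLMod B').ρ x) :
    ∃ f : B ⟶ B', bimodMap f = φ := by
  let g : B →+ B' := ⟨⟨fun b => φ b, φ.hom.map_zero⟩, φ.hom.map_add⟩
  have hR (x : R) (b : B) : g (inclR R S x • b) = inclR R S x • g b :=
    ConcreteCategory.congr_hom (hφ x) b
  have hS (s : Sᵐᵒᵖ) (b : B) : g (inclS R S s • b) = inclS R S s • g b :=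
    φ.hom.map_smul s b
  have hlin (w : Rᵐᵒᵖ ⊗[ℤ] S) (b : B) : g (op w • b) = op w • g b := by
    induction w using TensorProduct.induction_on with
    | zero =>
      exact (congrArg g (zero_smul (Rᵐᵒᵖ ⊗[ℤ] S)ᵐᵒᵖ b)).trans
        ((map_zero g).trans (zero_smul (Rᵐᵒᵖ ⊗[ℤ] S)ᵐᵒᵖ (g b)).symm)
    | tmul x s => rw [op_tmul_eq_inclR_mul_inclS, mul_smul, mul_smul, hR, hS]
    | add w₁ w₂ ih₁ ih₂ => rw [MulOpposite.op_add, add_smul, add_smul, map_add, ih₁, ih₂]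
  exact ⟨ModuleCat.ofHom ⟨g.toAddHom, fun z => hlin z.unop⟩, rfl⟩

end Bimodule

section ObjRRBimod
open TensorProduct

variable {R : Type u} [Ring R] {S : Type u} [Ring S]

lemma mulMap_one : mulMap R 1 = 𝟙 RR := by
  ext
  exact unop_injective (mul_one 1)

lemma mulMap_mul (x y : R) : mulMap R (x * y) = mulMap R y ≫ mulMap R x := by
  ext
  exact unop_injective (mul_assoc x y 1)

lemma mulMap_zero : mulMap R 0 = 0 := by
  ext
  exact unop_injective (zero_mul 1)

lemma mulMap_add (x y : R) : mulMap R (x + y) = mulMap R x + mulMap R y := by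
  ext
  exact unop_injective (add_mul x y 1)

variable (T : ModuleCat.{u} Rᵐᵒᵖ ⥤ ModuleCat.{u} Sᵐᵒᵖ) [T.Additive]

noncomputable def objRRLeftAction : R →+* Module.End ℤ (T.obj RR) where
  toFun x := (T.map (mulMap R x)).hom.toAddMonoidHom.toIntLinearMap
  map_one' := by ext m; simp [mulMap_one]
  map_mul' x y := by ext m; simp [mulMap_mul]
  map_zero' := by ext m; simp [mulMap_zero]
  map_add' x y := by ext m; simp [mulMap_add]

noncomputable def objRRBimodAction : (Rᵐᵒᵖ ⊗[ℤ] S)ᵐᵒᵖ →+* Module.End ℤ (T.obj RR) :=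
  (Algebra.TensorProduct.lift
      ((objRRLeftAction T).comp (RingEquiv.opOp R).symm.toRingHom).toIntAlgHom
      (Module.toModuleEnd ℤ (T.obj RR) : Sᵐᵒᵖ →+* _).toIntAlgHom
      fun x s => LinearMap.ext fun m => (T.map (mulMap R x.unop.unop)).hom.map_smul s m
    ).toRingHom.comp (Algebra.TensorProduct.opAlgEquiv ℤ ℤ Rᵐᵒᵖ S).symm.toRingEquiv.toRingHom

lemma objRRBimodAction_inclS (s : Sᵐᵒᵖ) :
    objRRBimodAction T (inclS R S s) = Module.toModuleEnd ℤ (T.obj RR) s := by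
  change objRRBimodAction T (op (1 ⊗ₜ s.unop)) = _
  simp [objRRBimodAction]

lemma objRRBimodAction_inclR (x : R) :
    objRRBimodAction T (inclR R S x) = objRRLeftAction T x := by
  change objRRBimodAction T (op (op x ⊗ₜ 1)) = _
  ext m
  simp [objRRBimodAction]

noncomputable def objRRBimod : ModuleCat.{u} (Rᵐᵒᵖ ⊗[ℤ] S)ᵐᵒᵖ :=
  letI : Module (Rᵐᵒᵖ ⊗[ℤ] S)ᵐᵒᵖ (T.obj RR) := Module.compHom (T.obj RR) (objRRBimodAction T)
  ModuleCat.of _ (T.obj RR)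

noncomputable def objRRBimodIso : (bimodToLMod (objRRBimod T)).X ≅ T.obj RR :=
  LinearEquiv.toModuleIso
    { Equiv.refl (T.obj RR) with
      map_add' := fun _ _ => rfl
      map_smul' := fun s b => LinearMap.congr_fun (objRRBimodAction_inclS T s) b }

lemma bimodToLMod_objRRBimod_ρ_comp (x : R) :
    (bimodToLMod (objRRBimod T)).ρ x ≫ (objRRBimodIso T).hom
      = (objRRBimodIso T).hom ≫ T.map (mulMap R x) := by
  ext b
  exact LinearMap.congr_fun (objRRBimodAction_inclR T x) b

end ObjRRBimod

section RightAdjoint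

variable {R : Type u} [Ring R]

noncomputable def toSpanSingletonRR (X : ModuleCat.{u} Rᵐᵒᵖ) (x : X) : RR ⟶ X :=
  ModuleCat.ofHom (LinearMap.toSpanSingleton Rᵐᵒᵖ X x)

lemma toSpanSingletonRR_apply_one (X : ModuleCat.{u} Rᵐᵒᵖ) (x : X) :
    toSpanSingletonRR X x 1 = x :=
  one_smul _ x

lemma toSpanSingletonRR_add (X : ModuleCat.{u} Rᵐᵒᵖ) (x y : X) :
    toSpanSingletonRR X (x + y) = toSpanSingletonRR X x + toSpanSingletonRR X y := by
  ext
  simp [toSpanSingletonRR]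

lemma toSpanSingletonRR_smul (X : ModuleCat.{u} Rᵐᵒᵖ) (r : Rᵐᵒᵖ) (x : X) :
    toSpanSingletonRR X (r • x) = mulMap R r.unop ≫ toSpanSingletonRR X x := by
  ext
  simp [toSpanSingletonRR, mulMap]

lemma toSpanSingletonRR_comp {X Y : ModuleCat.{u} Rᵐᵒᵖ} (f : X ⟶ Y) (x : X) :
    toSpanSingletonRR Y (f x) = toSpanSingletonRR X x ≫ f := by
  ext
  simp [toSpanSingletonRR]

lemma toSpanSingletonRR_eval_one {X : ModuleCat.{u} Rᵐᵒᵖ} (f : RR ⟶ X) :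
    toSpanSingletonRR X (f 1) = f := by
  ext
  simp [toSpanSingletonRR]

lemma isSeparator_RR : IsSeparator (RR : ModuleCat.{u} Rᵐᵒᵖ) := fun X Y f g h => by
  ext x
  simpa [toSpanSingletonRR] using ConcreteCategory.congr_hom
    (h RR ((ObjectProperty.singleton_iff _ _).2 rfl) (toSpanSingletonRR X x)) 1

lemma WattsObjZ.isLeftAdjoint {S : Type u} [Ring S] {T : ModuleCat.{u} Rᵐᵒᵖ ⥤ ModuleCat.{u} Sᵐᵒᵖ}
    (hT : WattsObjZ R S T) : T.IsLeftAdjoint := by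
  obtain ⟨-, ⟨_⟩, hcoprod⟩ := hT
  have (J : Type u) : PreservesColimitsOfShape (Discrete J) T := (hcoprod J).some
  have : PreservesColimits T := preservesColimits_of_preservesCoequalizers_and_coproducts T
  exact isLeftAdjoint_of_preservesColimits_of_isSeparating isSeparator_RR T

variable {k : Type*} [CommRing k] [Algebra k R] {A : Type*} [Category.{u} A] [Preadditive A]
  [CategoryTheory.Linear k A] {T : ModuleCat.{u} Rᵐᵒᵖ ⥤ A} [T.Additive] {G : A ⥤ ModuleCat.{u} Rᵐᵒᵖ}

/-- `G N ≅ Hom(R, G N) ≅ Hom_A(T(R), N) ≅ Hom_A(F, N)`. -/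
noncomputable def rightAdjointIsoHomFunctor (adj : T ⊣ G) (F : LMod k R A) (e : F.X ≅ T.obj RR)
    (he : ∀ x : R, F.ρ x ≫ e.hom = e.hom ≫ T.map (mulMap R x)) : G ≅ homFunctor F :=
  NatIso.ofComponents
    (fun N => LinearEquiv.toModuleIso
      { toFun g := e.hom ≫ (adj.homEquiv RR N).symm (toSpanSingletonRR (G.obj N) g)
        invFun α := adj.homEquiv RR N (e.inv ≫ α) 1
        map_add' g g' := by
          simp only [toSpanSingletonRR_add, Adjunction.homEquiv_counit, T.map_add,
            Preadditive.add_comp, Preadditive.comp_add]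
        map_smul' r g := by
          change _ = F.ρ r.unop ≫ _
          simp only [toSpanSingletonRR_smul, Adjunction.homEquiv_counit, T.map_comp,
            reassoc_of% he, Category.assoc]
        left_inv g := by
          change adj.homEquiv RR N (e.inv ≫ e.hom ≫ (adj.homEquiv RR N).symm _) 1 = g
          rw [e.inv_hom_id_assoc, Equiv.apply_symm_apply, toSpanSingletonRR_apply_one]
        right_inv α := by
          change e.hom ≫ (adj.homEquiv RR N).symm (toSpanSingletonRR _ _) = α
          rw [toSpanSingletonRR_eval_one, Equiv.symm_apply_apply, e.hom_inv_id_assoc] })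
    (fun {N N'} f => by
      ext g
      change e.hom ≫ (adj.homEquiv RR N').symm (toSpanSingletonRR _ (G.map f g))
        = (e.hom ≫ (adj.homEquiv RR N).symm (toSpanSingletonRR _ g)) ≫ f
      rw [toSpanSingletonRR_comp, Adjunction.homEquiv_naturality_right_symm, Category.assoc])

end RightAdjoint

noncomputable def WattsObjZ.adjunction {R S : Type u} [Ring R] [Ring S]
    {T : ModuleCat.{u} Rᵐᵒᵖ ⥤ ModuleCat.{u} Sᵐᵒᵖ} [T.Additive] (hT : WattsObjZ R S T) :
    T ⊣ homFunctor (bimodToLMod (objRRBimod T)) :=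
  have := hT.isLeftAdjoint
  let adj := Adjunction.ofIsLeftAdjoint T
  adj.ofNatIsoRight
    (rightAdjointIsoHomFunctor adj _ (objRRBimodIso T) (bimodToLMod_objRRBimod_ρ_comp T))

/-- **Watts's theorem as an equivalence.** The functor
`Ψ : Mod (Rᵒᵖ ⊗_ℤ S) ⥤ B(Mod R, Mod S)` induced by `B ↦ - ⊗_R B` (i.e. any functor
sending each bimodule `B` to a left adjoint of `Hom_S(B, -)` and acting on morphisms
in the induced way) is an equivalence of categories. -/
theorem classical_watts_equivalence
    (R : Type u) [Ring R] (S : Type u) [Ring S]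
    (Ψ : ModuleCat.{u} (TensorProduct ℤ Rᵐᵒᵖ S)ᵐᵒᵖ ⥤
      CategoryTheory.ObjectProperty.FullSubcategory (WattsObjZ R S))
    (adj : ∀ B, (Ψ.obj B).obj ⊣ homFunctor (bimodToLMod B))
    (hΨ : ∀ (B B' : ModuleCat.{u} (TensorProduct ℤ Rᵐᵒᵖ S)ᵐᵒᵖ) (f : B ⟶ B'),
      (Ψ.map f).hom = tensorMap (adj B) (adj B') (bimodMap f) (bimodMap_equivariant f)) :
    Ψ.IsEquivalence := by
  refine { faithful := ⟨fun {B B'} f g hfg => ?_⟩, full := ⟨fun {B B'} η => ?_⟩,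
           essSurj := ⟨fun T => ?_⟩ }
  · apply bimodMap_injective
    apply tensorMap_injective (adj B) (adj B')
    rw [← hΨ, ← hΨ, hfg]
  · obtain ⟨φ, hφ, hη⟩ := exists_tensorMap_eq (adj B) (adj B') η.hom
    obtain ⟨f, rfl⟩ := exists_bimodMap_eq φ hφ
    exact ⟨f, ObjectProperty.hom_ext _ ((hΨ B B' f).trans hη)⟩
  · have := T.property.1
    exact ⟨objRRBimod T.obj,
      ⟨ObjectProperty.isoMk _ ((adj _).leftAdjointUniq T.property.adjunction)⟩⟩
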